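/- arXiv:1801.03645 — 3 statements merged into one kernel-verified Lean document; each statement's English description precedes it below -/
import Mathlib

section
/- For a reference chain T_k → ... → T_1 and indices with 1 ≤ i < j−1 < k−1, the differences of root counts satisfy the supermodularity condition h_{j,i+1} − h_{j+1,i+1} ≥ h_{j,i} − h_{j+1,i}. -/
open Classical

/-- The set of roots of the chain `T j → ... → T i`: elements `x ∈ T i` reachable
from some element of `T j` via parent pointers through `T (j-1), ..., T i`. -/
noncomputable def rootSet {α : Type*} (T : ℕ → Finset α) (parent : α → Option α)
    (j i : ℕ) : Finset α :=
  (T i).filter (fun x => ∃ c : ℕ → α, c i = x ∧ (∀ m, i ≤ m → m ≤ j → c m ∈ T m) ∧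
    ∀ m, i ≤ m → m < j → parent (c (m + 1)) = some (c m))

/-- `h_{j,i}`: the number of roots of `T j → ... → T i`. -/
noncomputable def linH {α : Type*} (T : ℕ → Finset α) (parent : α → Option α)
    (j i : ℕ) : ℕ :=
  (rootSet T parent j i).card

lemma rootSet_anti {α : Type*} (T : ℕ → Finset α) (parent : α → Option α) (j i : ℕ) :
    rootSet T parent (j + 1) i ⊆ rootSet T parent j i := by
  intro x hx
  simp only [rootSet, Finset.mem_filter] at hx ⊢
  obtain ⟨hxi, c, hci, hmem, hp⟩ := hx
  exact ⟨hxi, c, hci, fun m h1 h2 => hmem m h1 (by omega),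
    fun m h1 h2 => hp m h1 (by omega)⟩

/-- (L4): supermodularity of root counts:
`h_{j,i+1} − h_{j+1,i+1} ≥ h_{j,i} − h_{j+1,i}` for `1 ≤ i < j−1 < k−1`. -/
theorem linH_supermodular {α : Type*} (k : ℕ) (T : ℕ → Finset α) (parent : α → Option α)
    (hdisj : ∀ m n, m ≠ n → Disjoint (T m) (T n))
    (hpar : ∀ m, m + 1 ≤ k → ∀ x ∈ T (m + 1), ∀ p, parent x = some p → p ∈ T m)
    (i j : ℕ) (hi : 1 ≤ i) (hij : i < j - 1) (hjk : j - 1 < k - 1) :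
    (linH T parent j i : ℤ) - linH T parent (j + 1) i ≤
      (linH T parent j (i + 1) : ℤ) - linH T parent (j + 1) (i + 1) := by
  have hij' : i < j := by omega
  classical
  set P : α → Prop := fun x => ∃ c : ℕ → α, c i = x ∧ (∀ m, i ≤ m → m ≤ j → c m ∈ T m) ∧
      ∀ m, i ≤ m → m < j → parent (c (m + 1)) = some (c m) with hP
  set f : α → α := fun x => if h : P x then (Classical.choose h) (i + 1) else x with hf
  -- key facts about f on rootSet j i
  have hfx : ∀ x, x ∈ rootSet T parent j i →
      f x ∈ rootSet T parent j (i + 1) ∧ parent (f x) = some x := by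
    intro x hx
    simp only [rootSet, Finset.mem_filter] at hx
    obtain ⟨hxT, hPx⟩ := hx
    have hPx' : P x := hPx
    have hfval : f x = (Classical.choose hPx') (i + 1) := dif_pos hPx'
    obtain ⟨h1, h2, h3⟩ := Classical.choose_spec hPx'
    constructor
    · rw [hfval]
      simp only [rootSet, Finset.mem_filter]
      refine ⟨h2 (i + 1) (by omega) (by omega), Classical.choose hPx', rfl,
        fun m hm1 hm2 => h2 m (by omega) hm2, fun m hm1 hm2 => h3 m (by omega) hm2⟩
    · rw [hfval]
      rw [h3 i le_rfl hij', h1]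
  have key : ((rootSet T parent j i) \ (rootSet T parent (j + 1) i)).card ≤
      ((rootSet T parent j (i + 1)) \ (rootSet T parent (j + 1) (i + 1))).card := by
    apply Finset.card_le_card_of_injOn f
    · intro x hx
      rw [Finset.mem_coe, Finset.mem_sdiff] at hx ⊢
      obtain ⟨hxA, hxB⟩ := hx
      obtain ⟨hmemA', hparfx⟩ := hfx x hxA
      refine ⟨hmemA', fun hcon => hxB ?_⟩
      -- extend a chain witnessing f x ∈ rootSet (j+1) (i+1) down to x
      simp only [rootSet, Finset.mem_filter] at hcon ⊢
      obtain ⟨hfT, d, hd1, hd2, hd3⟩ := hcon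
      have hxT : x ∈ T i := by
        simp only [rootSet, Finset.mem_filter] at hxA; exact hxA.1
      refine ⟨hxT, fun m => if m = i then x else d m, by simp, ?_, ?_⟩
      · intro m hm1 hm2
        by_cases hmi : m = i
        · simp [hmi, hxT]
        · simp only [if_neg hmi]
          exact hd2 m (by omega) hm2
      · intro m hm1 hm2
        by_cases hmi : m = i
        · subst hmi
          simp only [if_neg (by omega : m + 1 ≠ m), if_pos rfl, hd1]
          exact hparfx
        · simp only [if_neg (by omega : m + 1 ≠ i), if_neg hmi]
          exact hd3 m (by omega) hm2
    · intro x hx y hy hxy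
      have hpx := (hfx x (Finset.mem_sdiff.mp hx).1).2
      have hpy := (hfx y (Finset.mem_sdiff.mp hy).1).2
      rw [hxy, hpy] at hpx
      exact (Option.some_injective α hpx).symm
  have hBA : rootSet T parent (j + 1) i ⊆ rootSet T parent j i := rootSet_anti T parent j i
  have hBA' : rootSet T parent (j + 1) (i + 1) ⊆ rootSet T parent j (i + 1) :=
    rootSet_anti T parent j (i + 1)
  have e1 := Finset.card_sdiff_of_subset hBA
  have e2 := Finset.card_sdiff_of_subset hBA'
  have c1 := Finset.card_le_card hBA
  have c2 := Finset.card_le_card hBA'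
  simp only [linH]
  omega
end

section
/- In a reference chain T_k → ... → T_1, suppose the target value h̃_{n+1,1} satisfies h̃_{n+1,1} ≤ |T_{n+1}| and h̃_{n+1,1} ≤ h_{n,1} (the current number of roots of T_n → ... → T_1). Then by reassigning the parent pointers only of elements of T_{n+1} (each pointing to some element of T_n), one can obtain a configuration in which the number of roots of T_{n+1} → ... → T_1 equals h̃_{n+1,1}, without changing h_{j,i} for any j ≤ n. -/
open Classical

/-- Chains descending via `parent` are determined by their top element. -/
lemma chain_eq {α : Type*} (parent : α → Option α) {i j : ℕ} {c c' : ℕ → α}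
    (h : ∀ m, i ≤ m → m < j → parent (c (m + 1)) = some (c m))
    (h' : ∀ m, i ≤ m → m < j → parent (c' (m + 1)) = some (c' m))
    (htop : c j = c' j) : ∀ m, i ≤ m → m ≤ j → c m = c' m := by
  intro m hm hmj
  obtain ⟨d, hd⟩ := Nat.le.dest hmj
  induction d generalizing m with
  | zero => simpa [← hd] using htop
  | succ d ih =>
    have h1 : c (m + 1) = c' (m + 1) := ih (m + 1) (by omega) (by omega) (by omega)
    have e1 := h m hm (by omega)
    have e2 := h' m hm (by omega)
    rw [h1, e2] at e1
    exact (Option.some.inj e1).symm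

/-- Elements of distinct levels are distinct. -/
lemma not_mem_of_mem {α : Type*} {T : ℕ → Finset α}
    (hdisj : ∀ m n, m ≠ n → Disjoint (T m) (T n)) {a b : ℕ} {x : α}
    (hx : x ∈ T a) (hab : a ≠ b) : x ∉ T b :=
  fun hx' => (Finset.disjoint_left.mp (hdisj a b hab)) hx hx'

/-- If `parent'` agrees with `parent` off `T (n+1)` and `j ≤ n`, the root sets
for `j` agree. -/
lemma rootSet_congr {α : Type*} (T : ℕ → Finset α) (parent parent' : α → Option α)
    (hdisj : ∀ m n, m ≠ n → Disjoint (T m) (T n)) (n : ℕ)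
    (hagree : ∀ x, x ∉ T (n + 1) → parent' x = parent x)
    (j i : ℕ) (hj : j ≤ n) :
    rootSet T parent' j i = rootSet T parent j i := by
  unfold rootSet
  apply Finset.filter_congr
  intro x hx
  have key : ∀ (p q : α → Option α), (∀ y, y ∉ T (n + 1) → p y = q y) →
      (∃ c : ℕ → α, c i = x ∧ (∀ m, i ≤ m → m ≤ j → c m ∈ T m) ∧
        ∀ m, i ≤ m → m < j → p (c (m + 1)) = some (c m)) →
      (∃ c : ℕ → α, c i = x ∧ (∀ m, i ≤ m → m ≤ j → c m ∈ T m) ∧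
        ∀ m, i ≤ m → m < j → q (c (m + 1)) = some (c m)) := by
    rintro p q hpq ⟨c, hc1, hc2, hc3⟩
    refine ⟨c, hc1, hc2, fun m hm hmj => ?_⟩
    have hmem : c (m + 1) ∈ T (m + 1) := hc2 (m + 1) (by omega) (by omega)
    have hne : c (m + 1) ∉ T (n + 1) :=
      not_mem_of_mem hdisj hmem (by omega)
    rw [← hpq _ hne]
    exact hc3 m hm hmj
  exact ⟨key parent' parent hagree, key parent parent' (fun y hy => (hagree y hy).symm)⟩

/-- Leading-element adjustment: if the target `h̃_{n+1,1}` satisfies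
`h̃_{n+1,1} ≤ |T_{n+1}|` and `h̃_{n+1,1} ≤ h_{n,1}`, then by reassigning only the
parent pointers of elements of `T_{n+1}` (each pointing into `T n`), one obtains
a configuration with exactly `h̃_{n+1,1}` roots for `T_{n+1} → ... → T_1`,
leaving all `h_{j,i}` with `j ≤ n` unchanged. -/
theorem leading_element_adjust {α : Type*} (k : ℕ) (T : ℕ → Finset α)
    (parent : α → Option α)
    (hdisj : ∀ m n, m ≠ n → Disjoint (T m) (T n))
    (hpar : ∀ m, m + 1 ≤ k → ∀ x ∈ T (m + 1), ∀ p, parent x = some p → p ∈ T m)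
    (n : ℕ) (hn : 1 ≤ n) (hnk : n + 1 ≤ k)
    (htarget : ℕ) (h1 : htarget ≤ (T (n + 1)).card)
    (h2 : htarget ≤ linH T parent n 1) :
    ∃ parent' : α → Option α,
      (∀ x, x ∉ T (n + 1) → parent' x = parent x) ∧
      (∀ x ∈ T (n + 1), ∀ p, parent' x = some p → p ∈ T n) ∧
      linH T parent' (n + 1) 1 = htarget ∧
      (∀ j i, j ≤ n → linH T parent' j i = linH T parent j i) := by
  classical
  obtain ⟨R, hRsub, hRcard⟩ := Finset.exists_subset_card_eq h2
  obtain ⟨S, hSsub, hScard⟩ := Finset.exists_subset_card_eq h1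
  have hchain : ∀ r ∈ R, ∃ c : ℕ → α, c 1 = r ∧ (∀ m, 1 ≤ m → m ≤ n → c m ∈ T m) ∧
      ∀ m, 1 ≤ m → m < n → parent (c (m + 1)) = some (c m) := by
    intro r hr
    have := hRsub hr
    unfold linH rootSet at this
    exact (Finset.mem_filter.mp this).2
  choose! ch hch1 hch2 hch3 using hchain
  have e : (S : Finset α) ≃ (R : Finset α) := Finset.equivOfCardEq (hScard.trans hRcard.symm)
  set parent' : α → Option α := fun x =>
    if hx : x ∈ S then some (ch (e ⟨x, hx⟩) n) else
      if x ∈ T (n + 1) then none else parent x with hdef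
  have hagree : ∀ x, x ∉ T (n + 1) → parent' x = parent x := by
    intro x hx
    have hxS : x ∉ S := fun h => hx (hSsub h)
    simp [hdef, hxS, hx]
  refine ⟨parent', hagree, ?_, ?_, ?_⟩
  · intro x hx p hp
    by_cases hxS : x ∈ S
    · simp only [hdef, dif_pos hxS] at hp
      have hr : ((e ⟨x, hxS⟩ : (R : Finset α)) : α) ∈ R := (e ⟨x, hxS⟩).2
      rw [← Option.some.inj hp]
      exact hch2 _ hr n hn le_rfl
    · simp [hdef, hxS, hx] at hp
  · have hset : rootSet T parent' (n + 1) 1 = R := by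
      ext r
      unfold rootSet
      simp only [Finset.mem_filter]
      constructor
      · rintro ⟨hrT, c, hc1, hc2, hc3⟩
        have htop : c (n + 1) ∈ T (n + 1) := hc2 (n + 1) (by omega) le_rfl
        have hpc := hc3 n hn (by omega)
        by_cases hxS : c (n + 1) ∈ S
        · set r' := e ⟨c (n + 1), hxS⟩ with hr'
          have hpc' : parent' (c (n + 1)) = some (ch r' n) := by
            simp [hdef, hxS, hr']
          rw [hpc'] at hpc
          have hcn : c n = ch r' n := (Option.some.inj hpc).symm
          have hr'R : (r' : α) ∈ R := r'.2
          have hc3' : ∀ m, 1 ≤ m → m < n → parent (c (m + 1)) = some (c m) := by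
            intro m hm hmn
            have hmem : c (m + 1) ∈ T (m + 1) := hc2 (m + 1) (by omega) (by omega)
            have hne : c (m + 1) ∉ T (n + 1) := not_mem_of_mem hdisj hmem (by omega)
            rw [← hagree _ hne]
            exact hc3 m hm (by omega)
          have heq := chain_eq parent hc3' (hch3 _ hr'R) (by rw [hcn]) 1 le_rfl hn
          rw [hc1, hch1 _ hr'R] at heq
          rwa [heq]
        · exfalso
          simp [hdef, hxS, htop] at hpc
      · intro hr
        have hrT : r ∈ T 1 := by
          have hmemR := hRsub hr
          unfold linH rootSet at hmemR
          exact (Finset.mem_filter.mp hmemR).1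
        refine ⟨hrT, fun m => if m = n + 1 then ((e.symm ⟨r, hr⟩ : (S : Finset α)) : α) else ch r m,
          ?_, ?_, ?_⟩
        · simp only [if_neg (show (1:ℕ) ≠ n + 1 by omega)]
          exact hch1 r hr
        · intro m hm hmn1
          by_cases hm' : m = n + 1
          · simp only [if_pos hm', hm']
            exact hSsub (e.symm ⟨r, hr⟩).2
          · simp only [if_neg hm']
            exact hch2 r hr m hm (by omega)
        · intro m hm hmn
          by_cases hm' : m = n
          · simp only [if_pos (show m + 1 = n + 1 by omega), if_neg (show m ≠ n + 1 by omega)]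
            rw [hm']
            have hxS : ((e.symm ⟨r, hr⟩ : (S : Finset α)) : α) ∈ S := (e.symm ⟨r, hr⟩).2
            have hq : parent' ((e.symm ⟨r, hr⟩ : (S : Finset α)) : α)
                = some (ch (e ⟨((e.symm ⟨r, hr⟩ : (S : Finset α)) : α), hxS⟩) n) := by
              simp [hdef]
            have hcoe : (⟨((e.symm ⟨r, hr⟩ : (S : Finset α)) : α), hxS⟩ : (S : Finset α))
                = e.symm ⟨r, hr⟩ := Subtype.ext rfl
            rw [hq, hcoe, Equiv.apply_symm_apply]
          · simp only [if_neg (show m + 1 ≠ n + 1 by omega), if_neg (show m ≠ n + 1 by omega)]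
            have hmem : ch r (m + 1) ∈ T (m + 1) := hch2 r hr (m + 1) (by omega) (by omega)
            have hne : ch r (m + 1) ∉ T (n + 1) := not_mem_of_mem hdisj hmem (by omega)
            rw [hagree _ hne]
            exact hch3 r hr m hm (by omega)
    unfold linH
    rw [hset, hRcard]
  · intro j i hj
    unfold linH
    rw [rootSet_congr T parent parent' hdisj n hagree j i hj]
end

section
/- Every element of S_{j,i} \ S_{j+1,i} (a root of the chain up to T_j but not up to T_{j+1}) has at least one child in S_{j,i+1} \ S_{j+1,i+1}; consequently |S_{j,i} \ S_{j+1,i}| ≤ |S_{j,i+1} \ S_{j+1,i+1}| for 1 ≤ i < j − 1 < k − 1. -/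
open Classical

/-- Every element of `S_{j,i} \ S_{j+1,i}` has at least one child in
`S_{j,i+1} \ S_{j+1,i+1}`; consequently
`|S_{j,i} \ S_{j+1,i}| ≤ |S_{j,i+1} \ S_{j+1,i+1}|` for `1 ≤ i < j − 1 < k − 1`. -/
theorem rootSet_diff_child {α : Type*} (k : ℕ) (T : ℕ → Finset α)
    (parent : α → Option α)
    (hdisj : ∀ m n, m ≠ n → Disjoint (T m) (T n))
    (hpar : ∀ m, m + 1 ≤ k → ∀ x ∈ T (m + 1), ∀ p, parent x = some p → p ∈ T m)
    (i j : ℕ) (hi : 1 ≤ i) (hij : i < j - 1) (hjk : j - 1 < k - 1) :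
    (∀ t ∈ rootSet T parent j i \ rootSet T parent (j + 1) i,
      ∃ c ∈ rootSet T parent j (i + 1) \ rootSet T parent (j + 1) (i + 1),
        parent c = some t) ∧
    (rootSet T parent j i \ rootSet T parent (j + 1) i).card ≤
      (rootSet T parent j (i + 1) \ rootSet T parent (j + 1) (i + 1)).card := by
  have hij' : i < j := lt_of_lt_of_le hij (Nat.sub_le _ _)
  have main : ∀ t ∈ rootSet T parent j i \ rootSet T parent (j + 1) i,
      ∃ c ∈ rootSet T parent j (i + 1) \ rootSet T parent (j + 1) (i + 1),
        parent c = some t := by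
    intro t ht
    rw [Finset.mem_sdiff] at ht
    obtain ⟨htj, htj1⟩ := ht
    rw [rootSet, Finset.mem_filter] at htj
    obtain ⟨htT, c, hci, hcT, hcp⟩ := htj
    refine ⟨c (i + 1), ?_, ?_⟩
    · rw [Finset.mem_sdiff]
      constructor
      · rw [rootSet, Finset.mem_filter]
        refine ⟨hcT (i + 1) (by omega) (by omega), c, rfl,
          fun m hm1 hm2 => hcT m (by omega) hm2,
          fun m hm1 hm2 => hcp m (by omega) hm2⟩
      · intro hmem
        apply htj1
        rw [rootSet, Finset.mem_filter] at hmem ⊢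
        obtain ⟨_, c', hc'i, hc'T, hc'p⟩ := hmem
        refine ⟨htT, fun m => if m = i then t else c' m, by simp, ?_, ?_⟩
        · intro m hm1 hm2
          by_cases h : m = i
          · simp [h, htT]
          · simp only [h, if_false]; exact hc'T m (by omega) hm2
        · intro m hm1 hm2
          by_cases h : m = i
          · subst h
            have h1 : m + 1 ≠ m := by omega
            show parent (if m + 1 = m then t else c' (m + 1)) =
              some (if m = m then t else c' m)
            rw [if_neg h1, if_pos rfl, hc'i, ← hci]
            exact hcp m le_rfl hij'
          · have h1 : m + 1 ≠ i := by omega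
            simp only [h, h1, if_false]
            exact hc'p m (by omega) hm2
    · rw [← hci]
      exact hcp i le_rfl hij'
  refine ⟨main, ?_⟩
  classical
  have : ∀ t, ∃ c, t ∈ rootSet T parent j i \ rootSet T parent (j + 1) i →
      c ∈ rootSet T parent j (i + 1) \ rootSet T parent (j + 1) (i + 1) ∧
      parent c = some t := by
    intro t
    by_cases ht : t ∈ rootSet T parent j i \ rootSet T parent (j + 1) i
    · obtain ⟨c, hc1, hc2⟩ := main t ht
      exact ⟨c, fun _ => ⟨hc1, hc2⟩⟩
    · exact ⟨t, fun h => absurd h ht⟩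
  choose f hf using this
  apply Finset.card_le_card_of_injOn f (fun a ha => (hf a ha).1)
  intro a ha b hb hab
  have h1 := (hf a ha).2
  have h2 := (hf b hb).2
  rw [hab, h2] at h1
  exact (Option.some_injective _ h1).symm
end
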